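/- arXiv:2206.07750 — 7 statements merged into one kernel-verified Lean document; each statement's English description precedes it below -/
import Mathlib

section
/- For every integer z > 0, the product (2^1 - 1)(2^2 - 1)···(2^z - 1) satisfies (1/4)·2^{z(z+1)/2} ≤ ∏_{i=1}^z (2^i - 1) ≤ (1/2)·2^{z(z+1)/2}. -/
lemma aux_low (z : ℕ) (hz : 1 ≤ z) :
    (1 / 4 + (1 / 2) * (1 / 2) ^ z : ℝ) * 2 ^ (z * (z + 1) / 2) ≤
      ∏ i ∈ Finset.Icc 1 z, ((2 : ℝ) ^ i - 1) := by
  induction z, hz using Nat.le_induction with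
  | base => norm_num
  | succ z hz ih =>
      rw [Finset.prod_Icc_succ_top (by omega)]
      have heq : (z + 1) * (z + 1 + 1) / 2 = z * (z + 1) / 2 + (z + 1) := by
        have h1 : 2 ∣ z * (z + 1) := even_iff_two_dvd.mp (Nat.even_mul_succ_self z)
        have h2 : 2 ∣ (z + 1) * (z + 1 + 1) :=
          even_iff_two_dvd.mp (Nat.even_mul_succ_self (z + 1))
        have h3 : (z + 1) * (z + 1 + 1) = z * (z + 1) + 2 * (z + 1) := by ring
        omega
      rw [heq]
      have hx : (4 : ℝ) ≤ 2 ^ (z + 1) := by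
        calc (4 : ℝ) = 2 ^ 2 := by norm_num
        _ ≤ 2 ^ (z + 1) := by
          apply pow_le_pow_right₀ (by norm_num); omega
      have ht : ((1 / 2 : ℝ)) ^ (z + 1) * 2 ^ (z + 1) = 1 := by
        rw [← mul_pow]; norm_num
      have hS : (0 : ℝ) < 2 ^ (z * (z + 1) / 2) := by positivity
      have key : (1 / 4 + (1 / 2) * (1 / 2) ^ (z + 1) : ℝ) * 2 ^ (z + 1) ≤
          (1 / 4 + (1 / 2) * (1 / 2) ^ z : ℝ) * (2 ^ (z + 1) - 1) := by
        have h2 : ((1 / 2 : ℝ)) ^ (z + 1) ≤ 1 / 4 := by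
          calc ((1 / 2 : ℝ)) ^ (z + 1) ≤ (1 / 2 : ℝ) ^ 2 := by
                apply pow_le_pow_of_le_one (by norm_num) (by norm_num); omega
          _ = 1 / 4 := by norm_num
        have hz2 : ((1 / 2 : ℝ)) ^ z = 2 * (1 / 2) ^ (z + 1) := by ring
        nlinarith [ht, hx, h2]
      calc (1 / 4 + (1 / 2) * (1 / 2) ^ (z + 1) : ℝ) * 2 ^ (z * (z + 1) / 2 + (z + 1))
          = ((1 / 4 + (1 / 2) * (1 / 2) ^ (z + 1)) * 2 ^ (z + 1)) * 2 ^ (z * (z + 1) / 2) := by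
            rw [pow_add]; ring
        _ ≤ ((1 / 4 + (1 / 2) * (1 / 2) ^ z) * (2 ^ (z + 1) - 1)) * 2 ^ (z * (z + 1) / 2) := by
            apply mul_le_mul_of_nonneg_right key hS.le
        _ = ((1 / 4 + (1 / 2) * (1 / 2) ^ z) * 2 ^ (z * (z + 1) / 2)) * (2 ^ (z + 1) - 1) := by
            ring
        _ ≤ (∏ i ∈ Finset.Icc 1 z, ((2 : ℝ) ^ i - 1)) * (2 ^ (z + 1) - 1) := by
            apply mul_le_mul_of_nonneg_right ih
            nlinarith [hx]

lemma aux_high (z : ℕ) (hz : 1 ≤ z) :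
    ∏ i ∈ Finset.Icc 1 z, ((2 : ℝ) ^ i - 1) ≤ (1 / 2 : ℝ) * 2 ^ (z * (z + 1) / 2) := by
  induction z, hz using Nat.le_induction with
  | base => norm_num
  | succ z hz ih =>
      rw [Finset.prod_Icc_succ_top (by omega)]
      have heq : (z + 1) * (z + 1 + 1) / 2 = z * (z + 1) / 2 + (z + 1) := by
        have h1 : 2 ∣ z * (z + 1) := even_iff_two_dvd.mp (Nat.even_mul_succ_self z)
        have h2 : 2 ∣ (z + 1) * (z + 1 + 1) :=
          even_iff_two_dvd.mp (Nat.even_mul_succ_self (z + 1))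
        have h3 : (z + 1) * (z + 1 + 1) = z * (z + 1) + 2 * (z + 1) := by ring
        omega
      rw [heq]
      have h1 : (2 : ℝ) ^ (z + 1) - 1 ≤ 2 ^ (z + 1) := by linarith
      have h0 : (0 : ℝ) ≤ 2 ^ (z + 1) - 1 := by
        have : (1 : ℝ) ≤ 2 ^ (z + 1) := one_le_pow₀ (by norm_num)
        linarith
      calc (∏ i ∈ Finset.Icc 1 z, ((2 : ℝ) ^ i - 1)) * (2 ^ (z + 1) - 1)
          ≤ ((1 / 2 : ℝ) * 2 ^ (z * (z + 1) / 2)) * 2 ^ (z + 1) := by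
            apply mul_le_mul ih h1 h0 (by positivity)
        _ = (1 / 2 : ℝ) * 2 ^ (z * (z + 1) / 2 + (z + 1)) := by rw [pow_add]; ring

/-- For every integer `z > 0`,
`(1/4)·2^(z(z+1)/2) ≤ ∏_{i=1}^z (2^i - 1) ≤ (1/2)·2^(z(z+1)/2)`. -/
theorem stmt_0 (z : ℕ) (hz : 0 < z) :
    (1 / 4 : ℝ) * 2 ^ (z * (z + 1) / 2) ≤ ∏ i ∈ Finset.Icc 1 z, ((2 : ℝ) ^ i - 1) ∧
      ∏ i ∈ Finset.Icc 1 z, ((2 : ℝ) ^ i - 1) ≤ (1 / 2 : ℝ) * 2 ^ (z * (z + 1) / 2) := by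
  refine ⟨?_, aux_high z hz⟩
  refine le_trans ?_ (aux_low z hz)
  have : (0 : ℝ) ≤ (1 / 2) * (1 / 2) ^ z := by positivity
  have hS : (0 : ℝ) < 2 ^ (z * (z + 1) / 2) := by positivity
  nlinarith
end

section
/- For integers 0 ≤ y ≤ x, the Gaussian binomial coefficient at q=2 satisfies 2^{y(x-y)} ≤ binom(x,y)_2 ≤ 8 · 2^{y(x-y)}. -/
/-- The `q`-factorial at `q = 2`: `[z]₂! = ∏_{i=1}^z (2^i - 1)`, as a real number. -/
noncomputable def qFactTwo (z : ℕ) : ℝ := ∏ i ∈ Finset.Icc 1 z, ((2 : ℝ) ^ i - 1)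

/-- The Gaussian binomial coefficient at `q = 2`:
`binom(x,y)₂ = [x]₂! / ([y]₂! · [x-y]₂!)`. -/
noncomputable def gaussBinomTwo (x y : ℕ) : ℝ := qFactTwo x / (qFactTwo y * qFactTwo (x - y))

lemma two_pow_sub_one_pos {i : ℕ} (hi : 1 ≤ i) : (0:ℝ) < (2:ℝ)^i - 1 := by
  have : (2:ℝ)^1 ≤ 2^i := pow_le_pow_right₀ (by norm_num) hi
  simp at this; linarith

lemma qFactTwo_pos (z : ℕ) : 0 < qFactTwo z := by
  unfold qFactTwo
  apply Finset.prod_pos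
  intro i hi
  exact two_pow_sub_one_pos (Finset.mem_Icc.mp hi).1

lemma qFactTwo_add (d y : ℕ) :
    qFactTwo (d + y) = qFactTwo d * ∏ i ∈ Finset.Icc 1 y, ((2:ℝ)^(d+i) - 1) := by
  induction y with
  | zero => simp
  | succ n ih =>
    have h1 : qFactTwo (d + (n+1)) = qFactTwo (d + n) * ((2:ℝ)^(d+n+1) - 1) := by
      unfold qFactTwo
      rw [show d + (n+1) = (d+n) + 1 from by omega,
        Finset.prod_Icc_succ_top (by omega : 1 ≤ d + n + 1)]
    rw [h1, ih, Finset.prod_Icc_succ_top (by omega : 1 ≤ n + 1), mul_assoc,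
      show d + (n+1) = d + n + 1 from by omega]

lemma gauss_eq (d y : ℕ) :
    gaussBinomTwo (d+y) y = ∏ i ∈ Finset.Icc 1 y, (((2:ℝ)^(d+i)-1)/((2:ℝ)^i-1)) := by
  have h1 := (qFactTwo_pos d).ne'
  have h2 := (qFactTwo_pos y).ne'
  unfold gaussBinomTwo
  rw [show d + y - y = d from by omega, qFactTwo_add, Finset.prod_div_distrib]
  show qFactTwo d * _ / (qFactTwo y * qFactTwo d) = _ / qFactTwo y
  field_simp

lemma P_le_aux (y : ℕ) (hy : 1 ≤ y) :
    ∏ i ∈ Finset.Icc 1 y, ((2:ℝ)^i/((2:ℝ)^i-1)) ≤ 8 * (1 - (1/2:ℝ)^y) := by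
  induction y, hy using Nat.le_induction with
  | base => norm_num
  | succ n hn ih =>
    rw [Finset.prod_Icc_succ_top (by omega : 1 ≤ n + 1)]
    set b := (2:ℝ)^(n+1) with hb
    have hb2 : (2:ℝ) ≤ b := by
      rw [hb]; calc (2:ℝ) = 2^1 := by norm_num
        _ ≤ 2^(n+1) := pow_le_pow_right₀ (by norm_num) (by omega)
    have hbpos : (0:ℝ) < b - 1 := by linarith
    have hfpos : (0:ℝ) ≤ b / (b - 1) := by positivity
    have hhalf : ((1/2:ℝ))^n = 2 / b := by
      rw [hb]; rw [div_pow, one_pow, pow_succ]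
      field_simp
    have hhalf' : ((1/2:ℝ))^(n+1) = 1 / b := by
      rw [hb, div_pow, one_pow]
    calc (∏ i ∈ Finset.Icc 1 n, ((2:ℝ)^i/((2:ℝ)^i-1))) * (b / (b-1))
        ≤ 8 * (1 - (1/2:ℝ)^n) * (b / (b-1)) := mul_le_mul_of_nonneg_right ih hfpos
      _ ≤ 8 * (1 - (1/2:ℝ)^(n+1)) := by
          rw [hhalf, hhalf']
          have hbpos' : (0:ℝ) < b := by linarith
          have e1 : 8 * (1 - 2 / b) * (b / (b - 1)) = 8 * (b - 2) / (b - 1) := by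
            field_simp
          have e2 : 8 * (1 - 1 / b) = 8 * (b - 1) / b := by field_simp
          rw [e1, e2, div_le_div_iff₀ hbpos hbpos']
          nlinarith
  
lemma P_le (y : ℕ) : ∏ i ∈ Finset.Icc 1 y, ((2:ℝ)^i/((2:ℝ)^i-1)) ≤ 8 := by
  rcases Nat.eq_zero_or_pos y with h | h
  · simp [h]
  · have h1 := P_le_aux y h
    have h2 : (0:ℝ) < (1/2:ℝ)^y := by positivity
    linarith

/-- For integers `0 ≤ y ≤ x`, the Gaussian binomial coefficient at `q = 2`
satisfies `2^(y(x-y)) ≤ binom(x,y)₂ ≤ 8 · 2^(y(x-y))`. -/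
theorem stmt_1 (x y : ℕ) (hyx : y ≤ x) :
    (2 : ℝ) ^ (y * (x - y)) ≤ gaussBinomTwo x y ∧
      gaussBinomTwo x y ≤ 8 * (2 : ℝ) ^ (y * (x - y)) := by
  obtain ⟨d, rfl⟩ : ∃ d, x = d + y := ⟨x - y, by omega⟩
  rw [show d + y - y = d from by omega, gauss_eq d y]
  have hpow : ((2:ℝ)^d)^y = (2:ℝ)^(y*d) := by
    rw [← pow_mul, mul_comm]
  constructor
  · -- lower bound
    calc (2:ℝ)^(y*d) = ∏ _i ∈ Finset.Icc 1 y, (2:ℝ)^d := by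
          rw [Finset.prod_const, Nat.card_Icc]; simp [hpow]
      _ ≤ ∏ i ∈ Finset.Icc 1 y, (((2:ℝ)^(d+i)-1)/((2:ℝ)^i-1)) := by
          apply Finset.prod_le_prod
          · intro i _; positivity
          · intro i hi
            have hi1 := (Finset.mem_Icc.mp hi).1
            have hden := two_pow_sub_one_pos hi1
            rw [le_div_iff₀ hden]
            have h1 : (1:ℝ) ≤ 2^d := one_le_pow₀ (by norm_num)
            have : (2:ℝ)^(d+i) = 2^d * 2^i := by rw [pow_add]
            nlinarith
  · -- upper bound
    calc ∏ i ∈ Finset.Icc 1 y, (((2:ℝ)^(d+i)-1)/((2:ℝ)^i-1))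
        ≤ ∏ i ∈ Finset.Icc 1 y, ((2:ℝ)^d * ((2:ℝ)^i/((2:ℝ)^i-1))) := by
          apply Finset.prod_le_prod
          · intro i hi
            have hi1 := (Finset.mem_Icc.mp hi).1
            have hden := two_pow_sub_one_pos hi1
            have hnum : (0:ℝ) < 2^(d+i) - 1 := two_pow_sub_one_pos (by omega)
            positivity
          · intro i hi
            have hi1 := (Finset.mem_Icc.mp hi).1
            have hden := two_pow_sub_one_pos hi1
            rw [div_le_iff₀ hden, mul_comm ((2:ℝ)^d), mul_assoc,
              div_mul_eq_mul_div, le_div_iff₀ hden]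
            have : (2:ℝ)^(d+i) = 2^d * 2^i := by rw [pow_add]
            nlinarith [hden.le, (by positivity : (0:ℝ) < (2:ℝ)^(d+i))]
      _ = ((2:ℝ)^d)^y * ∏ i ∈ Finset.Icc 1 y, ((2:ℝ)^i/((2:ℝ)^i-1)) := by
          rw [Finset.prod_mul_distrib, Finset.prod_const, Nat.card_Icc]; simp
      _ ≤ (2:ℝ)^(y*d) * 8 := by
          rw [hpow]
          apply mul_le_mul_of_nonneg_left (P_le y) (by positivity)
      _ = 8 * (2:ℝ)^(y*d) := by ring
end

section
/- Let C_A, C_B ⊆ F_2^n be linear codes, each of minimum distance at least d_1. Suppose c ∈ C_A ⊗ F_2^n + F_2^n ⊗ C_B (i.e., c is a sum of a matrix whose columns lie in C_A and a matrix whose rows lie in C_B) and c is supported on (I_a × [n]) ∪ ([n] × I_b) with |I_a|, |I_b| < d_1. Then there exist c_a with all columns in C_A supported on [n] × I_b, and c_b with all rows in C_B supported on I_a × [n], such that c = c_a + c_b. -/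
private lemma func_sum {n : ℕ} (L : (Fin n → ZMod 2) →ₗ[ZMod 2] ZMod 2)
    (v : Fin n → Fin n → ZMod 2) :
    (fun x => L (fun k => v k x)) = ∑ k, L (fun j => if k = j then 1 else 0) • v k := by
  funext x
  rw [Finset.sum_apply, LinearMap.pi_apply_eq_sum_univ L (fun k => v k x)]
  simp [mul_comm]

private lemma func_mem {n : ℕ} (C : Submodule (ZMod 2) (Fin n → ZMod 2))
    (L : (Fin n → ZMod 2) →ₗ[ZMod 2] ZMod 2)
    (v : Fin n → Fin n → ZMod 2) (hv : ∀ k, v k ∈ C) :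
    (fun x => L (fun k => v k x)) ∈ C := by
  rw [func_sum]
  exact Submodule.sum_mem _ fun k _ => Submodule.smul_mem _ _ (hv k)

private lemma exists_functionals {n : ℕ} (C : Submodule (ZMod 2) (Fin n → ZMod 2))
    (I : Finset (Fin n))
    (hC : ∀ u ∈ C, (∀ k, k ∉ I → u k = 0) → u = 0) :
    ∃ L : Fin n → ((Fin n → ZMod 2) →ₗ[ZMod 2] ZMod 2),
      (∀ i, ∀ u ∈ C, L i u = u i) ∧
      (∀ i u, (∀ k, k ∉ I → u k = 0) → L i u = 0) ∧
      (∀ i, i ∉ I → ∀ u, L i u = u i) := by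
  classical
  set P : (Fin n → ZMod 2) →ₗ[ZMod 2] (Fin n → ZMod 2) :=
    LinearMap.pi (fun k => if k ∈ I then 0 else LinearMap.proj k) with hP
  have hPapp : ∀ u k, P u k = if k ∈ I then 0 else u k := by
    intro u k
    simp only [hP, LinearMap.pi_apply]
    split <;> simp
  have hq : LinearMap.ker (P.comp C.subtype) = ⊥ := by
    rw [LinearMap.ker_eq_bot']
    rintro ⟨u, hu⟩ h
    have h' : P u = 0 := h
    have hz : ∀ k, k ∉ I → u k = 0 := by
      intro k hk
      have := congrFun h' k
      rwa [hPapp, if_neg hk] at this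
    exact Subtype.ext (hC u hu hz)
  obtain ⟨r, hr⟩ := (P.comp C.subtype).exists_leftInverse_of_injective hq
  refine ⟨fun i => if i ∈ I then (LinearMap.proj i).comp (C.subtype.comp (r.comp P))
      else LinearMap.proj i, ?_, ?_, ?_⟩
  · intro i u hu
    by_cases hi : i ∈ I
    · simp only [if_pos hi, LinearMap.comp_apply]
      have : r (P u) = ⟨u, hu⟩ := by
        have := LinearMap.congr_fun hr ⟨u, hu⟩
        simpa using this
      rw [this]
      rfl
    · simp [if_neg hi]
  · intro i u hz
    have hPu : P u = 0 := by
      funext k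
      rw [hPapp]
      split
      · rfl
      · exact hz k (by assumption)
    by_cases hi : i ∈ I
    · simp [if_pos hi, hPu]
    · simpa [if_neg hi] using hz i hi
  · intro i hi u
    simp [if_neg hi]

/-- Let `C_A, C_B ⊆ F₂ⁿ` be linear codes of minimum distance at least `d₁`.
If `c` is a sum of a matrix with columns in `C_A` and a matrix with rows in `C_B`, and `c`
is supported on `(I_a × [n]) ∪ ([n] × I_b)` with `|I_a|, |I_b| < d₁`, then `c = c_a + c_b`
where `c_a` has all columns in `C_A` and is supported on `[n] × I_b`, and `c_b` has all rows
in `C_B` and is supported on `I_a × [n]`. -/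
theorem stmt_7 (n d1 : ℕ)
    (CA CB : Submodule (ZMod 2) (Fin n → ZMod 2))
    (hdA : ∀ v ∈ CA, v ≠ 0 → d1 ≤ hammingNorm v)
    (hdB : ∀ v ∈ CB, v ≠ 0 → d1 ≤ hammingNorm v)
    (c : Matrix (Fin n) (Fin n) (ZMod 2))
    (hc : ∃ a b : Matrix (Fin n) (Fin n) (ZMod 2),
      (∀ j, (fun i => a i j) ∈ CA) ∧ (∀ i, (fun j => b i j) ∈ CB) ∧ c = a + b)
    (Ia Ib : Finset (Fin n)) (hIa : Ia.card < d1) (hIb : Ib.card < d1)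
    (hsupp : ∀ i j, c i j ≠ 0 → i ∈ Ia ∨ j ∈ Ib) :
    ∃ ca cb : Matrix (Fin n) (Fin n) (ZMod 2),
      (∀ j, (fun i => ca i j) ∈ CA) ∧ (∀ i j, ca i j ≠ 0 → j ∈ Ib) ∧
      (∀ i, (fun j => cb i j) ∈ CB) ∧ (∀ i j, cb i j ≠ 0 → i ∈ Ia) ∧
      c = ca + cb := by
  classical
  obtain ⟨a, b, ha, hb, hab⟩ := hc
  have h2 : ∀ x : ZMod 2, x + x = 0 := by decide
  -- degenerate codewords supported inside a small set are zero
  have small : ∀ (C : Submodule (ZMod 2) (Fin n → ZMod 2))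
      (I : Finset (Fin n)), I.card < d1 →
      (∀ v ∈ C, v ≠ 0 → d1 ≤ hammingNorm v) →
      ∀ u ∈ C, (∀ k, k ∉ I → u k = 0) → u = 0 := by
    intro C I hI hd u hu hz
    by_contra hne
    have h1 := hd u hu hne
    have h2' : hammingNorm u ≤ I.card := by
      apply Finset.card_le_card
      intro k hk
      simp only [hammingNorm, Finset.mem_filter] at hk
      by_contra hkI
      exact hk.2 (hz k hkI)
    omega
  obtain ⟨L, hL1, hL2, hL3⟩ := exists_functionals CA Ia (small CA Ia hIa hdA)
  obtain ⟨M, hM1, hM2, hM3⟩ := exists_functionals CB Ib (small CB Ib hIb hdB)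
  set m : Matrix (Fin n) (Fin n) (ZMod 2) := fun i j => L i (fun k => M j (b k)) with hm
  have hm1 : ∀ i j, m i j = L i (fun k => b k j) := by
    intro i j
    simp only [hm]
    congr 1
    funext k
    exact hM1 j (b k) (hb k)
  have hbma : ∀ k l, b k l - a k l = c k l := by
    intro k l
    have hc' : c k l = a k l + b k l := by rw [hab]; rfl
    have hn : ∀ x : ZMod 2, -x = x := by decide
    rw [sub_eq_add_neg, hn, add_comm, hc']
  have hm2 : ∀ i j, m i j = M j (a i) := by
    intro i j
    have key : L i ((fun k => M j (b k)) - (fun k => M j (a k))) = 0 := by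
      apply hL2
      intro k hk
      have : (fun k => M j (b k)) k - (fun k => M j (a k)) k = M j (b k - a k) := by
        simp [map_sub]
      simp only [Pi.sub_apply]
      rw [show M j (b k) - M j (a k) = M j (b k - a k) from (map_sub (M j) _ _).symm]
      have hck : (b k - a k) = c k := by
        funext l
        exact hbma k l
      rw [hck]
      apply hM2
      intro l hl
      by_contra hne
      rcases hsupp k l hne with h | h
      · exact hk h
      · exact hl h
    have heq : L i (fun k => M j (b k)) = L i (fun k => M j (a k)) := by
      rw [map_sub] at key
      exact sub_eq_zero.mp key
    have hmem : (fun k => M j (a k)) ∈ CA := func_mem CA (M j) (fun l k => a k l) ha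
    calc m i j = L i (fun k => M j (a k)) := heq
      _ = (fun k => M j (a k)) i := hL1 i _ hmem
      _ = M j (a i) := rfl
  refine ⟨a + m, b + m, ?_, ?_, ?_, ?_, ?_⟩
  · intro j
    have hcol : (fun i => m i j) ∈ CA := by
      have : (fun i => m i j) = (fun i => M j (a i)) := by
        funext i; exact hm2 i j
      rw [this]
      exact func_mem CA (M j) (fun l k => a k l) ha
    exact CA.add_mem (ha j) hcol
  · intro i j hne
    by_contra hj
    apply hne
    show a i j + m i j = 0
    rw [hm2 i j, hM3 j hj (a i)]
    exact h2 _
  · intro i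
    have hrow : (fun j => m i j) ∈ CB := by
      have : (fun j => m i j) = (fun j => L i (fun k => b k j)) := by
        funext j; exact hm1 i j
      rw [this]
      exact func_mem CB (L i) b hb
    exact CB.add_mem (hb i) hrow
  · intro i j hne
    by_contra hi
    apply hne
    show b i j + m i j = 0
    rw [hm1 i j, hL3 i hi (fun k => b k j)]
    exact h2 _
  · funext i j
    show c i j = (a i j + m i j) + (b i j + m i j)
    rw [hab]
    show a i j + b i j = _
    rw [show a i j + m i j + (b i j + m i j) = a i j + b i j + (m i j + m i j) from by ring,
      h2, add_zero]
end

section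
/- Let C_A, C_B ⊆ F_2^n be linear codes of minimum distance at least d_1, and let c = c_a + c_b where c_a has columns in C_A supported on [n] × I_b and c_b has rows in C_B supported on I_a × [n], with |I_a|, |I_b| < d_1/2. Then the total Hamming weight of c satisfies |c| ≥ (d_1/2)·(N_a + N_b), where N_a is the number of nonzero columns of c_a and N_b the number of nonzero rows of c_b. -/
/-!
Split the support of `c` into the entries in rows outside `I_a` and those in rows of `I_a`.
Outside `I_a` we have `c = c_a`, so every nonzero column of `c_a` (a codeword of weight `≥ d₁`)
still has more than `d₁/2` nonzero entries of `c` in rows outside `I_a`. A nonzero row of `c_b`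
lies in `I_a`, and outside the columns `I_b` it agrees with the same row of `c`, so it contributes
more than `d₁/2` nonzero entries of `c` in a row of `I_a`.
-/

open Finset

lemma card_mul_le_sum_of_le {ι : Type*} [Fintype ι] {J : Finset ι} {f : ι → ℕ} {a : ℕ}
    (h : ∀ j ∈ J, a ≤ f j) : #J * a ≤ ∑ j, f j :=
  calc #J * a ≤ ∑ j ∈ J, f j := by simpa using J.card_nsmul_le_sum f a h
    _ ≤ ∑ j, f j := sum_le_univ_sum_of_nonneg fun _ ↦ Nat.zero_le _

lemma hammingNorm_sub_card_le_of_eqOn {ι β : Type*} [Fintype ι] [DecidableEq ι] [Zero β]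
    [DecidableEq β] {v w : ι → β} {I : Finset ι} (h : ∀ i ∉ I, w i = v i) :
    hammingNorm v - #I ≤ #{i | i ∉ I ∧ w i ≠ 0} := by
  have : ({i | i ∉ I ∧ w i ≠ 0} : Finset ι) = ({i | v i ≠ 0} : Finset ι) \ I := by
    ext i; by_cases hi : i ∈ I <;> simp [hi, h]
  rw [this]
  exact le_card_sdiff _ _

namespace Matrix

variable {m n β : Type*} [Fintype m] [Fintype n] [DecidableEq m] [Zero β]
  [DecidableEq β]

lemma card_mul_sub_card_le_card_filter_notMem_fst {c x : Matrix m n β} {I : Finset m}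
    {J : Finset n} {d : ℕ} (hd : ∀ j ∈ J, d ≤ hammingNorm fun i ↦ x i j)
    (hc : ∀ i ∉ I, ∀ j, c i j = x i j) :
    #J * (d - #I) ≤ #{p : m × n | p.1 ∉ I ∧ c p.1 p.2 ≠ 0} := by
  rw [card_filter, Fintype.sum_prod_type_right]
  simp only [← card_filter]
  refine card_mul_le_sum_of_le fun j hj ↦ ?_
  exact (Nat.sub_le_sub_right (hd j hj) _).trans
    (hammingNorm_sub_card_le_of_eqOn fun i hi ↦ hc i hi j)

lemma card_mul_sub_card_le_card_filter_mem_fst [DecidableEq n] {c y : Matrix m n β}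
    {I J : Finset m} {K : Finset n} {d : ℕ} (hJ : J ⊆ I)
    (hd : ∀ i ∈ J, d ≤ hammingNorm (y i))
    (hc : ∀ i, ∀ j ∉ K, c i j = y i j) :
    #J * (d - #K) ≤ #{p : m × n | p.1 ∈ I ∧ c p.1 p.2 ≠ 0} := by
  rw [card_filter, Fintype.sum_prod_type]
  simp only [← card_filter]
  refine card_mul_le_sum_of_le fun i hi ↦ ?_
  calc d - #K ≤ #{j | j ∉ K ∧ c i j ≠ 0} :=
        (Nat.sub_le_sub_right (hd i hi) _).trans (hammingNorm_sub_card_le_of_eqOn (hc i))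
    _ ≤ #{j | i ∈ I ∧ c i j ≠ 0} :=
        card_le_card fun j ↦ by simpa using fun _ h ↦ ⟨hJ hi, h⟩

end Matrix

/-- Let `C_A, C_B ⊆ F₂ⁿ` have minimum distance at least `d₁`, and let
`c = c_a + c_b` where `c_a` has columns in `C_A` supported on `[n] × I_b` and `c_b` has
rows in `C_B` supported on `I_a × [n]`, with `|I_a|, |I_b| < d₁/2`. Then the Hamming
weight of `c` satisfies `|c| ≥ (d₁/2)·(N_a + N_b)` (stated as `d₁·(N_a+N_b) ≤ 2·|c|`),
where `N_a` is the number of nonzero columns of `c_a` and `N_b` the number of nonzero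
rows of `c_b`. -/
theorem stmt_8 (n d1 : ℕ)
    (CA CB : Submodule (ZMod 2) (Fin n → ZMod 2))
    (hdA : ∀ v ∈ CA, v ≠ 0 → d1 ≤ hammingNorm v)
    (hdB : ∀ v ∈ CB, v ≠ 0 → d1 ≤ hammingNorm v)
    (c ca cb : Matrix (Fin n) (Fin n) (ZMod 2))
    (Ia Ib : Finset (Fin n)) (hIa : 2 * Ia.card < d1) (hIb : 2 * Ib.card < d1)
    (hca : ∀ j, (fun i => ca i j) ∈ CA) (hcasupp : ∀ i j, ca i j ≠ 0 → j ∈ Ib)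
    (hcb : ∀ i, (fun j => cb i j) ∈ CB) (hcbsupp : ∀ i j, cb i j ≠ 0 → i ∈ Ia)
    (hsum : c = ca + cb) :
    d1 * ((Finset.univ.filter fun j => ∃ i, ca i j ≠ 0).card +
          (@Finset.filter _ (fun i => ∃ j, cb i j ≠ 0)
            (fun _ => Nat.decidableExistsFin _) Finset.univ).card) ≤
      2 * (Finset.univ.filter fun p : Fin n × Fin n => c p.1 p.2 ≠ 0).card := by
  have hc_of_notMem_Ia : ∀ i ∉ Ia, ∀ j, c i j = ca i j := fun i hi j ↦ by
    rw [hsum, Matrix.add_apply, not_imp_comm.1 (hcbsupp i j) hi, add_zero]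
  have hc_of_notMem_Ib : ∀ i, ∀ j ∉ Ib, c i j = cb i j := fun i j hj ↦ by
    rw [hsum, Matrix.add_apply, not_imp_comm.1 (hcasupp i j) hj, zero_add]
  have hcols := Matrix.card_mul_sub_card_le_card_filter_notMem_fst
    (J := univ.filter fun j => ∃ i, ca i j ≠ 0)
    (fun j hj ↦ have ⟨i, hi⟩ := (mem_filter.1 hj).2
      hdA _ (hca j) (Function.ne_iff.2 ⟨i, hi⟩))
    hc_of_notMem_Ia
  have hrows := Matrix.card_mul_sub_card_le_card_filter_mem_fst (I := Ia)
    (J := @Finset.filter _ (fun i => ∃ j, cb i j ≠ 0) (fun _ => Nat.decidableExistsFin _) univ)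
    (fun i hi ↦ have ⟨j, hj⟩ : ∃ j, cb i j ≠ 0 := by simpa using hi
      hcbsupp i j hj)
    (fun i hi ↦ have ⟨j, hj⟩ : ∃ j, cb i j ≠ 0 := by simpa using hi
      hdB _ (hcb i) (Function.ne_iff.2 ⟨j, hj⟩))
    hc_of_notMem_Ib
  have hsplit : #{p : Fin n × Fin n | p.1 ∉ Ia ∧ c p.1 p.2 ≠ 0} +
      #{p : Fin n × Fin n | p.1 ∈ Ia ∧ c p.1 p.2 ≠ 0} =
      #{p : Fin n × Fin n | c p.1 p.2 ≠ 0} := by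
    rw [← card_filter_add_card_filter_not (s := {p : Fin n × Fin n | c p.1 p.2 ≠ 0})
      (fun p ↦ p.1 ∉ Ia), filter_filter, filter_filter]
    simp only [and_comm, not_not]
  have hA : d1 ≤ 2 * (d1 - #Ia) := by omega
  have hB : d1 ≤ 2 * (d1 - #Ib) := by omega
  nlinarith
end

section
/- Let H_A : F_2^{n_a} → F_2^{m_a} and H_B : F_2^{n_b} → F_2^{m_b} be linear maps. Define ∂₂ : F_2^{n_a × n_b} → F_2^{n_a × m_b} ⊕ F_2^{m_a × n_b} by ∂₂(c) = ((I ⊗ H_B)c, (H_A ⊗ I)c), and ∂₁ : F_2^{n_a × m_b} ⊕ F_2^{m_a × n_b} → F_2^{m_a × m_b} by ∂₁(c_a, c_b) = (H_A ⊗ I)c_a + (I ⊗ H_B)c_b. Then ∂₁ ∘ ∂₂ = 0 and moreover ker ∂₁ = im ∂₂ (the complex is exact at the middle term). -/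
open Matrix

lemma exists_right_inv_of_surj {m n : ℕ} (H : Matrix (Fin m) (Fin n) (ZMod 2))
    (h : Function.Surjective H.mulVec) :
    ∃ G : Matrix (Fin n) (Fin m) (ZMod 2), H * G = 1 := by
  choose g hg using h
  refine ⟨Matrix.of fun i j => g (Pi.single j 1) i, ?_⟩
  ext i j
  have := congrFun (hg (Pi.single j 1)) i
  simpa [Matrix.mul_apply, Matrix.mulVec, dotProduct, Matrix.one_apply,
    Pi.single_apply, eq_comm] using this

lemma matrix_add_self {m n : ℕ} (M : Matrix (Fin m) (Fin n) (ZMod 2)) : M + M = 0 := by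
  ext i j
  exact CharTwo.add_self_eq_zero _

/-- Let `H_A : F₂^{n_a} → F₂^{m_a}` and `H_B : F₂^{n_b} → F₂^{m_b}` be
(full-rank, i.e. surjective) parity-check maps. Identifying `(I ⊗ H_B) c = c · H_Bᵀ`
(apply `H_B` to each row) and `(H_A ⊗ I) c = H_A · c` (apply `H_A` to each column), the
maps `∂₂ c = (c · H_Bᵀ, H_A · c)` and `∂₁ (c_a, c_b) = H_A · c_a + c_b · H_Bᵀ` satisfy
`∂₁ ∘ ∂₂ = 0`, and the complex is exact at the middle term: `ker ∂₁ = im ∂₂`. -/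
theorem stmt_11 (na nb ma mb : ℕ)
    (HA : Matrix (Fin ma) (Fin na) (ZMod 2)) (HB : Matrix (Fin mb) (Fin nb) (ZMod 2))
    (hA : Function.Surjective HA.mulVec) (hB : Function.Surjective HB.mulVec) :
    (∀ c : Matrix (Fin na) (Fin nb) (ZMod 2),
        HA * (c * HBᵀ) + (HA * c) * HBᵀ = 0) ∧
      (∀ (ca : Matrix (Fin na) (Fin mb) (ZMod 2)) (cb : Matrix (Fin ma) (Fin nb) (ZMod 2)),
        HA * ca + cb * HBᵀ = 0 →
        ∃ c : Matrix (Fin na) (Fin nb) (ZMod 2), ca = c * HBᵀ ∧ cb = HA * c) := by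
  constructor
  · intro c
    rw [Matrix.mul_assoc]
    exact matrix_add_self _
  · intro ca cb h
    obtain ⟨GA, hGA⟩ := exists_right_inv_of_surj HA hA
    obtain ⟨GB, hGB⟩ := exists_right_inv_of_surj HB hB
    have hGBT : GBᵀ * HBᵀ = 1 := by
      rw [← Matrix.transpose_mul, hGB, Matrix.transpose_one]
    have hcb : cb * HBᵀ = HA * ca := by
      have h2 := add_eq_zero_iff_eq_neg.mp h
      rw [h2]
      ext i j
      simp [Matrix.neg_apply, CharTwo.neg_eq]
    refine ⟨GA * cb + (ca + GA * (HA * ca)) * GBᵀ, ?_, ?_⟩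
    · have e1 : (GA * cb + (ca + GA * (HA * ca)) * GBᵀ) * HBᵀ
          = GA * (cb * HBᵀ) + (ca + GA * (HA * ca)) * (GBᵀ * HBᵀ) := by
        simp [Matrix.add_mul, Matrix.mul_assoc]
      rw [e1, hcb, hGBT, Matrix.mul_one, add_comm ca, ← add_assoc, matrix_add_self, zero_add]
    · have e2 : HA * (GA * cb + (ca + GA * (HA * ca)) * GBᵀ)
          = (HA * GA) * cb + ((HA * ca) + (HA * GA) * (HA * ca)) * GBᵀ := by
        simp [Matrix.mul_add, Matrix.add_mul, Matrix.mul_assoc]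
      rw [e2, hGA, Matrix.one_mul, Matrix.one_mul, matrix_add_self, Matrix.zero_mul, add_zero]
end

section
/- Let H_A be a fixed full-rank m_a × Δ matrix over F_2 with kernel of dimension k_a = Δ - m_a, chosen uniformly among parity-check matrices of dimension-k_a codes, and let c be a Δ×Δ matrix of rank r over F_2. Then Pr[rank(H_A c) = r'] ≤ binom(m_a, r')₂ · binom(r'+k_a, r)₂ / binom(Δ, r)₂, where binom(·,·)₂ denotes the Gaussian binomial coefficient at q = 2. -/
open Matrix

/-- The Gaussian binomial coefficient `binom(x,y)₂`: the number of `y`-dimensional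
subspaces of an `x`-dimensional vector space over `F₂`. -/
noncomputable def gaussBinom (x y : ℕ) : ℕ :=
  Nat.card {W : Submodule (ZMod 2) (Fin x → ZMod 2) // Module.finrank (ZMod 2) W = y}

open Module Function

/-!
For surjective `H`, `rank (H * c) = dim H(V)` with `V` the column space of `c`, so the event
`rank (H * c) = r'` is covered by the events `V ≤ H⁻¹(W)` for the `binom(m_a, r')₂` subspaces `W`
of dimension `r'`. For fixed `W`, double count the pairs `(H, V₀)` with `H` surjective,
`dim V₀ = r` and `V₀ ≤ H⁻¹(W)`: each `H` has `binom(r' + k_a, r)₂` partners, since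
`dim H⁻¹(W) = r' + k_a`; and each `V₀` has as many partners as `V`, because `H ↦ H g` permutes the
surjections while `GL(F₂^Δ)` acts transitively on `r`-dimensional subspaces.
-/

theorem card_mul_eq_card_mul_of_biregular {α β : Type*} [Finite α] [Finite β]
    (P : α → Prop) (Q : β → Prop) (R : α → β → Prop) {m n : ℕ}
    (hm : ∀ a, P a → Nat.card {b // Q b ∧ R a b} = m)
    (hn : ∀ b, Q b → Nat.card {a // P a ∧ R a b} = n) :
    Nat.card {a // P a} * m = Nat.card {b // Q b} * n := by
  classical
  have := Fintype.ofFinite α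
  have := Fintype.ofFinite β
  simp only [Nat.card_eq_fintype_card, Fintype.card_subtype] at hm hn ⊢
  refine Finset.card_mul_eq_card_mul R (fun a ha => ?_) (fun b hb => ?_)
  · simpa [Finset.bipartiteAbove, Finset.filter_filter] using hm a (by simpa using ha)
  · simpa [Finset.bipartiteBelow, Finset.filter_filter] using hn b (by simpa using hb)

theorem Nat.card_mul_le_card_mul_of_card_fiber_mul_le {α β : Type*} [Finite α] [Finite β]
    (g : α → β) {d n : ℕ} (h : ∀ b, Nat.card {a // g a = b} * d ≤ n) :
    Nat.card α * d ≤ Nat.card β * n := by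
  have := Fintype.ofFinite β
  calc Nat.card α * d = ∑ b, Nat.card {a // g a = b} * d := by
        rw [← Finset.sum_mul, ← Nat.card_sigma, Nat.card_congr (Equiv.sigmaFiberEquiv g)]
    _ ≤ ∑ _ : β, n := Finset.sum_le_sum fun b _ => h b
    _ = Nat.card β * n := by simp [Nat.card_eq_fintype_card]

section LinearAlgebra

variable {K E F : Type*} [Field K] [AddCommGroup E] [Module K E] [AddCommGroup F] [Module K F]

instance [Finite E] [Finite F] : Finite (E →ₗ[K] F) :=
  Finite.of_injective _ DFunLike.coe_injective

theorem Submodule.exists_linearEquiv_map_eq [FiniteDimensional K E] {p q : Submodule K E}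
    (h : finrank K p = finrank K q) : ∃ g : E ≃ₗ[K] E, p.map (g : E →ₗ[K] E) = q := by
  obtain ⟨p', hp'⟩ := p.exists_isCompl
  obtain ⟨q', hq'⟩ := q.exists_isCompl
  have h' : finrank K p' = finrank K q' := by
    have := Submodule.finrank_add_eq_of_isCompl hp'
    have := Submodule.finrank_add_eq_of_isCompl hq'
    omega
  let g := (Submodule.prodEquivOfIsCompl p p' hp').symm ≪≫ₗ
    (LinearEquiv.ofFinrankEq _ _ h).prodCongr (LinearEquiv.ofFinrankEq _ _ h') ≪≫ₗ
    Submodule.prodEquivOfIsCompl q q' hq'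
  refine ⟨g, Submodule.eq_of_le_of_finrank_eq ?_ (by rw [LinearEquiv.finrank_map_eq, h])⟩
  rintro _ ⟨x, hx, rfl⟩
  simp [g, Submodule.prodEquivOfIsCompl_symm_apply_left p p' hp' ⟨x, hx⟩]

theorem Submodule.finrank_comap_add_finrank_of_surjective [FiniteDimensional K E]
    {f : E →ₗ[K] F} (hf : Surjective f) (W : Submodule K F) :
    finrank K (W.comap f) + finrank K F = finrank K W + finrank K E := by
  have hker : LinearMap.ker f ≤ W.comap f := fun x hx => by simp [LinearMap.mem_ker.mp hx]
  have hrange := LinearMap.finrank_range_add_finrank_ker (f.domRestrict (W.comap f))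
  have hrank := LinearMap.finrank_range_add_finrank_ker f
  rw [LinearMap.range_domRestrict, Submodule.map_comap_eq_of_surjective hf,
    LinearMap.ker_domRestrict, (Submodule.comapSubtypeEquivOfLe hker).finrank_eq] at hrange
  rw [LinearMap.range_eq_top.2 hf, finrank_top] at hrank
  omega

theorem card_surjective_le_comap_congr [FiniteDimensional K E] (W : Submodule K F)
    {V V' : Submodule K E} (h : finrank K V = finrank K V') :
    Nat.card {f : E →ₗ[K] F // Surjective f ∧ V ≤ W.comap f} =
      Nat.card {f : E →ₗ[K] F // Surjective f ∧ V' ≤ W.comap f} := by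
  obtain ⟨g, hg⟩ := Submodule.exists_linearEquiv_map_eq h
  refine (Nat.card_congr <| (g.symm.arrowCongr (LinearEquiv.refl K F)).toEquiv.subtypeEquiv
    fun f => ?_).symm
  have hcomp : (g.symm.arrowCongr (LinearEquiv.refl K F)) f = f ∘ₗ (g : E →ₗ[K] E) := rfl
  simp only [LinearEquiv.coe_toEquiv, hcomp, LinearMap.coe_comp, LinearEquiv.coe_coe,
    Surjective.of_comp_iff f g.surjective, Submodule.comap_comp,
    ← Submodule.map_le_iff_le_comap, hg]

end LinearAlgebra

section GaussBinom

variable {E F : Type*} [AddCommGroup E] [Module (ZMod 2) E] [AddCommGroup F] [Module (ZMod 2) F]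

theorem gaussBinom_finrank_eq_card [FiniteDimensional (ZMod 2) E] (r : ℕ) :
    gaussBinom (finrank (ZMod 2) E) r =
      Nat.card {W : Submodule (ZMod 2) E // finrank (ZMod 2) W = r} := by
  let e : (Fin (finrank (ZMod 2) E) → ZMod 2) ≃ₗ[ZMod 2] E := LinearEquiv.ofFinrankEq _ _ (by simp)
  exact Nat.card_congr <| (Submodule.orderIsoMapComap e).toEquiv.subtypeEquiv fun W => by
    rw [← e.finrank_map_eq W]; rfl

theorem gaussBinom_finrank_eq_card_le [FiniteDimensional (ZMod 2) E]
    (U : Submodule (ZMod 2) E) (r : ℕ) :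
    gaussBinom (finrank (ZMod 2) U) r =
      Nat.card {W : Submodule (ZMod 2) E // W ≤ U ∧ finrank (ZMod 2) W = r} := by
  rw [gaussBinom_finrank_eq_card]
  exact Nat.card_congr <| ((Submodule.MapSubtype.orderIso U).toEquiv.subtypeEquiv
    (q := fun W => finrank (ZMod 2) W.1 = r)
    fun W => by rw [← Submodule.finrank_map_subtype_eq U W]; rfl).trans
    (Equiv.subtypeSubtypeEquivSubtypeInter (· ≤ U) (finrank (ZMod 2) · = r))

variable [Finite E] [Finite F]

theorem card_surjective_le_comap_mul_gaussBinom (V : Submodule (ZMod 2) E)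
    (W : Submodule (ZMod 2) F) {n : ℕ}
    (hn : finrank (ZMod 2) W + finrank (ZMod 2) E = n + finrank (ZMod 2) F) :
    Nat.card {f : E →ₗ[ZMod 2] F // Surjective f ∧ V ≤ W.comap f} *
        gaussBinom (finrank (ZMod 2) E) (finrank (ZMod 2) V) =
      Nat.card {f : E →ₗ[ZMod 2] F // Surjective f} * gaussBinom n (finrank (ZMod 2) V) := by
  rw [gaussBinom_finrank_eq_card, mul_comm]
  refine (card_mul_eq_card_mul_of_biregular (fun f : E →ₗ[ZMod 2] F => Surjective f)
    (fun V₀ : Submodule (ZMod 2) E => finrank (ZMod 2) V₀ = finrank (ZMod 2) V)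
    (fun f V₀ => V₀ ≤ W.comap f) (fun f hf => ?_) (fun V₀ hV₀ => ?_)).symm
  · have hcomap : finrank (ZMod 2) (W.comap f) = n := by
      have := Submodule.finrank_comap_add_finrank_of_surjective hf W
      omega
    rw [← hcomap, gaussBinom_finrank_eq_card_le]
    exact Nat.card_congr (Equiv.subtypeEquivRight fun _ => and_comm)
  · exact card_surjective_le_comap_congr W hV₀

theorem card_surjective_finrank_map_eq_mul_le (V : Submodule (ZMod 2) E) {r' n : ℕ}
    (hn : r' + finrank (ZMod 2) E = n + finrank (ZMod 2) F) :
    Nat.card {f : E →ₗ[ZMod 2] F // Surjective f ∧ finrank (ZMod 2) (V.map f) = r'} *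
        gaussBinom (finrank (ZMod 2) E) (finrank (ZMod 2) V) ≤
      gaussBinom (finrank (ZMod 2) F) r' * gaussBinom n (finrank (ZMod 2) V) *
        Nat.card {f : E →ₗ[ZMod 2] F // Surjective f} := by
  rw [gaussBinom_finrank_eq_card (E := F), mul_assoc, mul_comm (gaussBinom n _)]
  refine Nat.card_mul_le_card_mul_of_card_fiber_mul_le (fun f => ⟨V.map f.1, f.2.2⟩)
    fun W => ?_
  rw [← card_surjective_le_comap_mul_gaussBinom V W.1 (by rw [W.2]; exact hn)]
  refine Nat.mul_le_mul_right _ (Nat.card_le_card_of_injective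
    (fun f => ⟨f.1.1, f.1.2.1, Submodule.map_le_iff_le_comap.1 (congrArg Subtype.val f.2).le⟩)
    fun f g hfg => Subtype.ext <| Subtype.ext <| by simpa using hfg)

end GaussBinom

section Matrix

variable {K : Type*} [Field K] {l m n : Type*} [Fintype n]

theorem Matrix.rank_eq_card_iff_surjective [Fintype m] (H : Matrix m n K) :
    H.rank = Fintype.card m ↔ Surjective H.mulVecLin := by
  rw [← LinearMap.range_eq_top, Matrix.rank, ← Module.finrank_fintype_fun_eq_card K]
  exact ⟨Submodule.eq_top_of_finrank_eq, fun h => by rw [h, finrank_top]⟩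

theorem Matrix.rank_mul_eq_finrank_map_range [Fintype m] (A : Matrix l m K) (B : Matrix m n K) :
    (A * B).rank = finrank K ((LinearMap.range B.mulVecLin).map A.mulVecLin) := by
  rw [Matrix.rank, Matrix.mulVecLin_mul, LinearMap.range_comp]

theorem Matrix.card_subtype_mulVecLin [DecidableEq n] (P : ((n → K) →ₗ[K] m → K) → Prop) :
    Nat.card {H : Matrix m n K // P H.mulVecLin} = Nat.card {f : (n → K) →ₗ[K] m → K // P f} :=
  Nat.card_congr <| Matrix.toLin'.toEquiv.subtypeEquiv fun H => by
    rw [LinearEquiv.coe_toEquiv, Matrix.toLin'_apply']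

end Matrix

/-- Let `H_A` be a uniformly random full-rank `m_a × Δ` matrix over `F₂`
(equivalently, a uniformly random parity-check matrix of a dimension-`k_a = Δ - m_a`
code), and let `c` be a fixed `Δ×Δ` matrix of rank `r`. Then
`Pr[rank(H_A·c) = r'] ≤ binom(m_a,r')₂ · binom(r'+k_a,r)₂ / binom(Δ,r)₂`. -/
theorem stmt_15 (Δ ma ka r r' : ℕ) (hma : ma ≤ Δ) (hka : ka = Δ - ma)
    (c : Matrix (Fin Δ) (Fin Δ) (ZMod 2)) (hrank : c.rank = r) :
    ((Nat.card {H : Matrix (Fin ma) (Fin Δ) (ZMod 2) //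
        H.rank = ma ∧ (H * c).rank = r'} : ℝ) /
      (Nat.card {H : Matrix (Fin ma) (Fin Δ) (ZMod 2) // H.rank = ma} : ℝ)) ≤
      (gaussBinom ma r' : ℝ) * (gaussBinom (r' + ka) r : ℝ) / (gaussBinom Δ r : ℝ) := by
  set V := LinearMap.range c.mulVecLin
  have hV : finrank (ZMod 2) V = r := hrank
  have hsurj (H : Matrix (Fin ma) (Fin Δ) (ZMod 2)) : H.rank = ma ↔ Surjective H.mulVecLin := by
    simpa using H.rank_eq_card_iff_surjective
  simp only [hsurj, Matrix.rank_mul_eq_finrank_map_range]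
  rw [Matrix.card_subtype_mulVecLin (fun f => Surjective f ∧ finrank (ZMod 2) (V.map f) = r'),
    Matrix.card_subtype_mulVecLin fun f => Surjective f]
  have hcount := card_surjective_finrank_map_eq_mul_le (F := Fin ma → ZMod 2) V
    (r' := r') (n := r' + ka) (by simp only [finrank_fin_fun]; omega)
  rw [finrank_fin_fun, finrank_fin_fun, hV] at hcount
  rcases eq_or_ne (Nat.card {f : (Fin Δ → ZMod 2) →ₗ[ZMod 2] Fin ma → ZMod 2 // Surjective f}) 0
    with h0 | h0
  · rw [h0, Nat.cast_zero, div_zero]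
    positivity
  have hpos : 0 < gaussBinom Δ r := by
    rw [← finrank_fin_fun (ZMod 2) (n := Δ), gaussBinom_finrank_eq_card]
    have : Nonempty {W : Submodule (ZMod 2) (Fin Δ → ZMod 2) // finrank (ZMod 2) W = r} :=
      ⟨⟨V, hV⟩⟩
    exact Nat.card_pos
  rw [div_le_div_iff₀ (by positivity) (by positivity)]
  exact_mod_cast hcount
end

section
/- Let X be a chain complex F_2^{X(2)} →^{∂₂} F_2^{X(1)} →^{∂₁} F_2^{X(0)} with (α, β, γ)-small-set boundary expansion. Then the classical code C = ker ∂₂ ⊆ F_2^{X(2)} with parity check matrix H = ∂₂ satisfies: for all v ∈ F_2^{X(2)}, ‖Hv‖ ≥ min(1/γ, α|X(1)|/|X(2)|) · min_{c ∈ C} ‖v - c‖. -/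
/-- Let `F₂^{X(2)} →^{∂₂} F₂^{X(1)} →^{∂₁} F₂^{X(0)}` be a chain
complex with `(α, β, γ)`-small-set boundary expansion (with `β, γ > 0`), using Hamming
weight as the norm. Then the classical code `C = ker ∂₂` with parity-check map `H = ∂₂`
is locally testable: for all `v`, there is a codeword `c ∈ C` with
`‖∂₂ v‖ ≥ min(1/γ, α·|X(1)|/|X(2)|) · ‖v - c‖`. -/
theorem stmt_19 (X2 X1 X0 : Type) [Fintype X2] [Fintype X1] [Fintype X0]
    [DecidableEq X2] [DecidableEq X1] [DecidableEq X0]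
    (d2 : (X2 → ZMod 2) →ₗ[ZMod 2] (X1 → ZMod 2))
    (d1 : (X1 → ZMod 2) →ₗ[ZMod 2] (X0 → ZMod 2))
    (hchain : ∀ c, d1 (d2 c) = 0)
    (α β γ : ℝ) (hβ : 0 < β) (hγ : 0 < γ)
    (hSSE : ∀ c1 : X1 → ZMod 2, (hammingNorm c1 : ℝ) < α * Fintype.card X1 →
      ∃ c2 : X2 → ZMod 2,
        β * (hammingNorm (c1 + d2 c2) : ℝ) ≤ (hammingNorm (d1 c1) : ℝ) ∧
        (hammingNorm c2 : ℝ) ≤ γ * (hammingNorm c1 : ℝ)) :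
    ∀ v : X2 → ZMod 2, ∃ c : X2 → ZMod 2, d2 c = 0 ∧
      min (1 / γ) (α * Fintype.card X1 / Fintype.card X2) * (hammingNorm (v - c) : ℝ) ≤
        (hammingNorm (d2 v) : ℝ) := by

  intro v
  by_cases hsmall : (hammingNorm (d2 v) : ℝ) < α * Fintype.card X1
  · obtain ⟨c2, h1, h2⟩ := hSSE (d2 v) hsmall
    rw [hchain] at h1
    simp only [hammingNorm_zero, Nat.cast_zero] at h1
    have hz : (hammingNorm (d2 v + d2 c2) : ℝ) = 0 := by
      have : (0:ℝ) ≤ (hammingNorm (d2 v + d2 c2) : ℝ) := Nat.cast_nonneg _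
      nlinarith
    have hz' : hammingNorm (d2 v + d2 c2) = 0 := by exact_mod_cast hz
    have heq : d2 v + d2 c2 = 0 := hammingNorm_eq_zero.mp hz'
    refine ⟨v + c2, ?_, ?_⟩
    · rw [map_add]; exact heq
    · have hvc : v - (v + c2) = c2 := by
        have h1 : v - (v + c2) = -c2 := by ring
        rw [h1]; ext i; simp [CharTwo.neg_eq]
      rw [hvc]
      calc min (1/γ) (α * Fintype.card X1 / Fintype.card X2) * (hammingNorm c2 : ℝ)
          ≤ (1/γ) * (hammingNorm c2 : ℝ) := by
            apply mul_le_mul_of_nonneg_right (min_le_left _ _) (Nat.cast_nonneg _)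
        _ ≤ (1/γ) * (γ * (hammingNorm (d2 v) : ℝ)) := by
            apply mul_le_mul_of_nonneg_left h2 (by positivity)
        _ = (hammingNorm (d2 v) : ℝ) := by field_simp
  · push_neg at hsmall
    refine ⟨0, map_zero d2, ?_⟩
    rw [sub_zero]
    set m := min (1/γ) (α * Fintype.card X1 / Fintype.card X2) with hm
    rcases le_or_gt m 0 with hm0 | hm0
    · have : m * (hammingNorm v : ℝ) ≤ 0 :=
        mul_nonpos_of_nonpos_of_nonneg hm0 (Nat.cast_nonneg _)
      exact this.trans (Nat.cast_nonneg _)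
    · rcases Nat.eq_zero_or_pos (Fintype.card X2) with hc | hc
      · have hv0 : hammingNorm v = 0 := by
          have := hammingNorm_le_card_fintype (x := v)
          omega
        rw [hv0]
        simp
      · have hle : (hammingNorm v : ℝ) ≤ Fintype.card X2 := by
          exact_mod_cast hammingNorm_le_card_fintype (x := v)
        have hmin : m ≤ α * Fintype.card X1 / Fintype.card X2 := min_le_right _ _
        have hcpos : (0:ℝ) < Fintype.card X2 := by exact_mod_cast hc
        calc m * (hammingNorm v : ℝ) ≤ (α * Fintype.card X1 / Fintype.card X2) * Fintype.card X2 := by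
              apply mul_le_mul hmin hle (Nat.cast_nonneg _) (le_trans hm0.le hmin)
          _ = α * Fintype.card X1 := by field_simp
          _ ≤ (hammingNorm (d2 v) : ℝ) := hsmall
end
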